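/- Let Ω = [−1/2, 1/2]^n ⊂ ℝ^n, 0 < p < ∞, 0 < q ≤ ∞, σ > 0, and r > σ an integer. The quantity (∫_0^1 t^{−σq} ω_r(χ_Ω, t)_p^q dt/t)^{1/q} is finite if and only if either σ < 1/p, or σ = 1/p and q = ∞. -/

import Mathlib

/-!
For `‖h‖ ≤ t`, `Δ_h^r χ_Ω (x)` vanishes unless the points `x, x + h, …, x + r h` do not all lie
on the same side of `∂Ω`, which confines it to a set of measure `O(t)`; hence
`ω_r(χ_Ω, t)_p ≲ t^{1/p}` (here `r ≥ 1` because `0 < σ < r`). Conversely, for `h = t e₁` it equals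
`±1` on a slab of width `t` along a face of the cube, so `ω_r(χ_Ω, t)_p ≥ t^{1/p}`. The functional
is therefore finite exactly when the same functional of `t^{1/p - σ}` is, and
`∫_0^1 t^{(1/p - σ) q} dt/t < ∞` iff `σ < 1/p`, while `sup_{0<t<1} t^{1/p - σ} < ∞` iff `σ ≤ 1/p`.
-/

open MeasureTheory Set
open scoped ENNReal

noncomputable section

/-- The `r`-th modulus of smoothness `ω_r(χ_Ω, t)_p` of the characteristic function of
the unit cube `Ω = [-1/2,1/2]^n`. -/
def omegaCube (n r : ℕ) (p : ℝ≥0∞) (t : ℝ) : ℝ≥0∞ :=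
  ⨆ h : {h : EuclideanSpace ℝ (Fin n) // ‖h‖ ≤ t},
    eLpNorm (fun x : EuclideanSpace ℝ (Fin n) =>
        ∑ i ∈ Finset.range (r + 1), (-1 : ℝ) ^ (r - i) * (r.choose i : ℝ) *
          Set.indicator {y : EuclideanSpace ℝ (Fin n) | ∀ d, |y d| ≤ 1 / 2}
            (fun _ => (1 : ℝ)) (x + (i : ℝ) • (h : EuclideanSpace ℝ (Fin n))))
      p volume

/-- The `r`-th forward difference `Δ_h^r f (x)`. -/
def finiteDiff {E : Type*} [AddCommGroup E] [Module ℝ E] (r : ℕ) (h : E) (f : E → ℝ) (x : E) : ℝ :=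
  ∑ i ∈ Finset.range (r + 1), (-1 : ℝ) ^ (r - i) * (r.choose i : ℝ) * f (x + (i : ℝ) • h)

section finiteDiff

variable {E : Type*} [AddCommGroup E] [Module ℝ E] {r : ℕ} {h x : E} {f : E → ℝ}

theorem finiteDiff_eq_zero_of_forall_eq (hr : r ≠ 0)
    (hf : ∀ i ∈ Finset.range (r + 1), f (x + (i : ℝ) • h) = f x) : finiteDiff r h f x = 0 := by
  have hbinom : ∑ i ∈ Finset.range (r + 1), (-1 : ℝ) ^ (r - i) * (r.choose i : ℝ) = 0 := by
    simpa [hr] using (add_pow (1 : ℝ) (-1) r).symm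
  rw [finiteDiff, Finset.sum_congr rfl fun i hi => by rw [hf i hi], ← Finset.sum_mul, hbinom,
    zero_mul]

theorem abs_finiteDiff_le {M : ℝ} (hf : ∀ y, |f y| ≤ M) : |finiteDiff r h f x| ≤ 2 ^ r * M := by
  calc |finiteDiff r h f x|
      ≤ ∑ i ∈ Finset.range (r + 1), (r.choose i : ℝ) * M := by
        refine (Finset.abs_sum_le_sum_abs _ _).trans (Finset.sum_le_sum fun i _ => ?_)
        rw [abs_mul, abs_mul, abs_pow, abs_neg, abs_one, one_pow, one_mul, Nat.abs_cast]
        exact mul_le_mul_of_nonneg_left (hf _) (Nat.cast_nonneg _)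
    _ = 2 ^ r * M := by
        rw [← Finset.sum_mul, ← Nat.cast_sum, Nat.sum_range_choose, Nat.cast_pow, Nat.cast_ofNat]

end finiteDiff

theorem eLpNorm_finiteDiff_indicator_le {E : Type*} [AddCommGroup E] [Module ℝ E]
    [MeasurableSpace E] [MeasurableAdd E] (μ : Measure E) {S : Set E} (hS : MeasurableSet S)
    {r : ℕ} (hr : r ≠ 0) {p : ℝ≥0∞} (hp : p ≠ 0) (hp_top : p ≠ ∞) (h : E) :
    eLpNorm (finiteDiff r h (S.indicator fun _ => 1)) p μ ≤
      2 ^ r * (∑ i ∈ Finset.range (r + 1), μ (symmDiff S ((· + (i : ℝ) • h) ⁻¹' S))) ^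
        (1 / p.toReal) := by
  set D := ⋃ i ∈ Finset.range (r + 1), symmDiff S ((· + (i : ℝ) • h) ⁻¹' S)
  have hD : MeasurableSet D := .biUnion (Finset.countable_toSet _) fun i _ =>
    hS.symmDiff (hS.preimage (measurable_add_const _))
  have hpt : ∀ x, ‖finiteDiff r h (S.indicator fun _ => 1) x‖ ≤
      ‖D.indicator (fun _ => (2 : ℝ) ^ r) x‖ := by
    intro x
    by_cases hx : x ∈ D
    · rw [indicator_of_mem hx, Real.norm_eq_abs, Real.norm_eq_abs,
        abs_of_pos (a := (2 : ℝ) ^ r) (by positivity), ← mul_one ((2 : ℝ) ^ r)]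
      refine abs_finiteDiff_le fun y => ?_
      by_cases hy : y ∈ S <;> simp [hy]
    · have hconst : ∀ i ∈ Finset.range (r + 1),
          S.indicator (fun _ => (1 : ℝ)) (x + (i : ℝ) • h) = S.indicator (fun _ => 1) x := by
        intro i hi
        have hxi : x ∉ symmDiff S ((· + (i : ℝ) • h) ⁻¹' S) := fun hxi => hx (mem_biUnion hi hxi)
        simp only [mem_symmDiff, mem_preimage, not_or, not_and, not_not] at hxi
        by_cases hxS : x ∈ S
        · simp [hxS, hxi.1 hxS]
        · simp [hxS, mt hxi.2 hxS]
      rw [finiteDiff_eq_zero_of_forall_eq hr hconst, norm_zero]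
      exact norm_nonneg _
  calc eLpNorm (finiteDiff r h (S.indicator fun _ => 1)) p μ
      ≤ eLpNorm (D.indicator fun _ => (2 : ℝ) ^ r) p μ := eLpNorm_mono hpt
    _ = 2 ^ r * μ D ^ (1 / p.toReal) := by
        rw [eLpNorm_indicator_const hD hp hp_top, enorm_pow, Real.enorm_of_nonneg zero_le_two,
          ENNReal.ofReal_ofNat]
    _ ≤ _ := by
        gcongr
        exact measure_biUnion_finset_le _ _

section Box

variable {ι : Type*} [Fintype ι]

theorem measurableSet_setOf_forall_mem {I : ι → Set ℝ} (hI : ∀ d, MeasurableSet (I d)) :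
    MeasurableSet {x : EuclideanSpace ℝ ι | ∀ d, x d ∈ I d} := by
  simp only [ofPred_forall]
  exact .iInter fun d => (by fun_prop : Measurable fun x : EuclideanSpace ℝ ι => x d) (hI d)

theorem volume_setOf_forall_mem (I : ι → Set ℝ) :
    volume {x : EuclideanSpace ℝ ι | ∀ d, x d ∈ I d} = ∏ d, volume (I d) := by
  have hpre : {x : EuclideanSpace ℝ ι | ∀ d, x d ∈ I d} =
      (MeasurableEquiv.toLp 2 (ι → ℝ)).symm ⁻¹' univ.pi I := by
    ext x; simp [MeasurableEquiv.toLp_symm_apply]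
  rw [hpre, (EuclideanSpace.volume_preserving_symm_measurableEquiv_toLp ι).measure_preimage_equiv,
    volume_pi_pi]

theorem volume_setOf_forall_mem_update_Icc [DecidableEq ι] (d : ι) (J : Set ℝ) :
    volume {x : EuclideanSpace ℝ ι |
      ∀ e, x e ∈ Function.update (fun _ => Icc (-(1 / 2)) (1 / 2)) d J e} = volume J := by
  rw [volume_setOf_forall_mem,
    Finset.prod_eq_single d (fun e _ he => by norm_num [he, Real.volume_Icc]) (by simp)]
  simp

end Box

def unitCube (ι : Type*) : Set (EuclideanSpace ℝ ι) := {y | ∀ d, |y d| ≤ 1 / 2}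

section unitCube

variable {ι : Type*} [Fintype ι]

theorem measurableSet_unitCube : MeasurableSet (unitCube ι) := by
  simpa only [unitCube, abs_le, ← mem_Icc] using
    measurableSet_setOf_forall_mem (ι := ι) fun _ => measurableSet_Icc

theorem volume_unitCube_diff_preimage_add_le (v : EuclideanSpace ℝ ι) :
    volume (unitCube ι \ (· + v) ⁻¹' unitCube ι) ≤ 2 * Fintype.card ι * ENNReal.ofReal ‖v‖ := by
  classical
  set J := Icc (1 / 2 - ‖v‖) (1 / 2) ∪ Icc (-(1 / 2)) (-(1 / 2) + ‖v‖)
  have hsub : unitCube ι \ (· + v) ⁻¹' unitCube ι ⊆ ⋃ d, {x : EuclideanSpace ℝ ι |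
      ∀ e, x e ∈ Function.update (fun _ => Icc (-(1 / 2)) (1 / 2)) d J e} := by
    rintro x ⟨hx, hxv⟩
    simp only [unitCube, mem_preimage, mem_ofPred_eq, not_forall, not_le, PiLp.add_apply] at hx hxv
    obtain ⟨d, hd⟩ := hxv
    refine mem_iUnion.2 ⟨d, fun e => ?_⟩
    rcases eq_or_ne e d with rfl | he
    · have hvd : |v e| ≤ ‖v‖ := by simpa using PiLp.norm_apply_le v e
      simp only [Function.update_self, J, mem_union, mem_Icc]
      rcases abs_le.1 (hx e) with ⟨h1, h2⟩
      rcases lt_abs.1 hd with h | h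
      · left; constructor <;> linarith [le_abs_self (v e)]
      · right; constructor <;> linarith [neg_abs_le (v e)]
    · simpa [Function.update_of_ne he, abs_le] using hx e
  have hJ : volume J ≤ 2 * ENNReal.ofReal ‖v‖ := by
    refine (measure_union_le _ _).trans_eq ?_
    simp only [Real.volume_Icc]
    ring_nf
  calc volume (unitCube ι \ (· + v) ⁻¹' unitCube ι)
      ≤ ∑ d : ι, volume {x : EuclideanSpace ℝ ι |
          ∀ e, x e ∈ Function.update (fun _ => Icc (-(1 / 2)) (1 / 2)) d J e} :=
        (measure_mono hsub).trans (measure_iUnion_fintype_le _ _)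
    _ ≤ ∑ _d : ι, 2 * ENNReal.ofReal ‖v‖ := by
        gcongr with d
        rw [volume_setOf_forall_mem_update_Icc]
        exact hJ
    _ = 2 * Fintype.card ι * ENNReal.ofReal ‖v‖ := by
        rw [Finset.sum_const, Finset.card_univ, nsmul_eq_mul]
        ring

theorem volume_symmDiff_unitCube_preimage_add_le (v : EuclideanSpace ℝ ι) :
    volume (symmDiff (unitCube ι) ((· + v) ⁻¹' unitCube ι)) ≤
      4 * Fintype.card ι * ENNReal.ofReal ‖v‖ := by
  have hback : (· + v) ⁻¹' unitCube ι \ unitCube ι =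
      (· + v) ⁻¹' (unitCube ι \ (· + -v) ⁻¹' unitCube ι) := by
    ext x; simp
  calc volume (symmDiff (unitCube ι) ((· + v) ⁻¹' unitCube ι))
      ≤ volume (unitCube ι \ (· + v) ⁻¹' unitCube ι) +
          volume (unitCube ι \ (· + -v) ⁻¹' unitCube ι) := by
        rw [symmDiff_def, ← measure_preimage_add_right volume v
          (unitCube ι \ (· + -v) ⁻¹' unitCube ι), ← hback]
        exact measure_union_le _ _
    _ ≤ 2 * Fintype.card ι * ENNReal.ofReal ‖v‖ + 2 * Fintype.card ι * ENNReal.ofReal ‖-v‖ :=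
        add_le_add (volume_unitCube_diff_preimage_add_le v) (volume_unitCube_diff_preimage_add_le _)
    _ = 4 * Fintype.card ι * ENNReal.ofReal ‖v‖ := by
        rw [norm_neg]; ring

end unitCube

theorem omegaCube_eq_iSup_eLpNorm_finiteDiff (n r : ℕ) (p : ℝ≥0∞) (t : ℝ) :
    omegaCube n r p t = ⨆ h : {h : EuclideanSpace ℝ (Fin n) // ‖h‖ ≤ t},
      eLpNorm (finiteDiff r (h : EuclideanSpace ℝ (Fin n))
        ((unitCube (Fin n)).indicator fun _ => 1)) p volume :=
  rfl

section omegaCube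

variable {n r : ℕ} {p t : ℝ}

theorem omegaCube_le (hr : r ≠ 0) (hp : 0 < p) (ht : 0 ≤ t) :
    omegaCube n r (ENNReal.ofReal p) t ≤
      2 ^ r * (4 * n * (r + 1) * r : ℝ≥0∞) ^ (1 / p) * ENNReal.ofReal (t ^ (1 / p)) := by
  rw [omegaCube_eq_iSup_eLpNorm_finiteDiff]
  refine iSup_le fun ⟨h, hh⟩ => ?_
  refine (eLpNorm_finiteDiff_indicator_le volume measurableSet_unitCube hr
    (by simpa using hp) ENNReal.ofReal_ne_top h).trans ?_
  rw [ENNReal.toReal_ofReal hp.le, mul_assoc, ← ENNReal.ofReal_rpow_of_nonneg ht (by positivity),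
    ← ENNReal.mul_rpow_of_nonneg _ _ (by positivity)]
  gcongr
  calc ∑ i ∈ Finset.range (r + 1),
        volume (symmDiff (unitCube (Fin n)) ((· + (i : ℝ) • h) ⁻¹' unitCube (Fin n)))
      ≤ ∑ _i ∈ Finset.range (r + 1), 4 * n * ENNReal.ofReal (r * t) := by
        gcongr with i hi
        refine (volume_symmDiff_unitCube_preimage_add_le _).trans ?_
        rw [Fintype.card_fin]
        gcongr
        rw [norm_smul, Real.norm_natCast]
        exact mul_le_mul (by exact_mod_cast Finset.mem_range_succ_iff.1 hi) hh (norm_nonneg _)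
          (Nat.cast_nonneg _)
    _ = 4 * n * (r + 1) * r * ENNReal.ofReal t := by
        rw [Finset.sum_const, Finset.card_range, nsmul_eq_mul,
          ENNReal.ofReal_mul (Nat.cast_nonneg _), ENNReal.ofReal_natCast]
        push_cast
        ring

theorem ofReal_rpow_le_omegaCube (hn : 0 < n) (hp : 0 < p) (ht₀ : 0 < t) (ht₁ : t ≤ 1) :
    ENNReal.ofReal (t ^ (1 / p)) ≤ omegaCube n r (ENNReal.ofReal p) t := by
  set d : Fin n := ⟨0, hn⟩
  set h : EuclideanSpace ℝ (Fin n) := EuclideanSpace.single d t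
  -- On the slab `A` the point `x` lies in the cube while all `x + i h` with `i ≥ 1` leave it.
  set A := {x : EuclideanSpace ℝ (Fin n) |
    ∀ e, x e ∈ Function.update (fun _ => Icc (-(1 / 2)) (1 / 2)) d (Ioc (1 / 2 - t) (1 / 2)) e}
  have hA : MeasurableSet A := measurableSet_setOf_forall_mem fun e => by
    rcases eq_or_ne e d with rfl | he
    · simp
    · simp [Function.update_of_ne he]
  have hdiff : ∀ x ∈ A, finiteDiff r h ((unitCube (Fin n)).indicator fun _ => 1) x = (-1) ^ r := by
    intro x hx
    have hxd : x d ∈ Ioc (1 / 2 - t) (1 / 2) := by simpa using hx d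
    rw [finiteDiff, Finset.sum_eq_single 0]
    · have hx0 : x ∈ unitCube (Fin n) := fun e => by
        rcases eq_or_ne e d with he | he
        · rw [he]
          exact abs_le.2 ⟨by linarith [hxd.1], hxd.2⟩
        · simpa [Function.update_of_ne he, abs_le] using hx e
      simp [hx0]
    · intro i _ hi
      have hxi : x + (i : ℝ) • h ∉ unitCube (Fin n) := fun hmem => by
        have h1 := (abs_le.1 (hmem d)).2
        have h2 : (1 : ℝ) ≤ i := Nat.one_le_cast.2 (Nat.one_le_iff_ne_zero.2 hi)
        simp only [PiLp.add_apply, PiLp.smul_apply, h, PiLp.single_apply, ↓reduceIte,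
          smul_eq_mul] at h1
        nlinarith [hxd.1]
      simp [hxi]
    · simp
  calc ENNReal.ofReal (t ^ (1 / p))
      = eLpNorm (A.indicator fun _ => (1 : ℝ)) (ENNReal.ofReal p) volume := by
        rw [eLpNorm_indicator_const hA (by simpa using hp) ENNReal.ofReal_ne_top,
          volume_setOf_forall_mem_update_Icc, Real.volume_Ioc, sub_sub_cancel,
          ENNReal.toReal_ofReal hp.le,
          ENNReal.ofReal_rpow_of_nonneg ht₀.le (by positivity)]
        norm_num
    _ ≤ eLpNorm (finiteDiff r h ((unitCube (Fin n)).indicator fun _ => 1))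
          (ENNReal.ofReal p) volume := by
        refine eLpNorm_mono fun x => ?_
        by_cases hx : x ∈ A
        · simp [hx, hdiff x hx]
        · simp [hx]
    _ ≤ omegaCube n r (ENNReal.ofReal p) t := by
        rw [omegaCube_eq_iSup_eLpNorm_finiteDiff]
        exact le_iSup_of_le
          (⟨h, by simp [h, abs_of_pos ht₀]⟩ : {h : EuclideanSpace ℝ (Fin n) // ‖h‖ ≤ t}) le_rfl

end omegaCube

/-- The `L_q(dt/t)` quasi-norm of `g` on `(0, 1)`, with the pointwise supremum for `q = ∞`. -/
def lqNormDtOverT (q : ℝ≥0∞) (g : ℝ → ℝ≥0∞) : ℝ≥0∞ :=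
  if q = ∞ then ⨆ t : {t : ℝ // t ∈ Ioo (0 : ℝ) 1}, g t
  else (∫⁻ t in Ioo (0 : ℝ) 1, g t ^ q.toReal * ENNReal.ofReal t⁻¹) ^ (1 / q.toReal)

section lqNormDtOverT

variable {q : ℝ≥0∞} {g w : ℝ → ℝ≥0∞}

theorem lqNormDtOverT_mono (hgw : ∀ t ∈ Ioo (0 : ℝ) 1, g t ≤ w t) :
    lqNormDtOverT q g ≤ lqNormDtOverT q w := by
  unfold lqNormDtOverT
  split_ifs
  · exact iSup_mono fun t => hgw t t.2
  · gcongr ?_ ^ _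
    exact setLIntegral_mono' measurableSet_Ioo fun t ht => by gcongr; exact hgw t ht

theorem lqNormDtOverT_const_mul (hq : q ≠ 0) {c : ℝ≥0∞} (hc : c ≠ ∞) :
    lqNormDtOverT q (fun t => c * g t) = c * lqNormDtOverT q g := by
  unfold lqNormDtOverT
  split_ifs with hq_top
  · exact (ENNReal.mul_iSup _ _).symm
  · have hq₀ : 0 < q.toReal := ENNReal.toReal_pos hq hq_top
    simp_rw [ENNReal.mul_rpow_of_nonneg _ _ hq₀.le, mul_assoc]
    rw [lintegral_const_mul' _ _ (ENNReal.rpow_ne_top_of_nonneg hq₀.le hc),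
      ENNReal.mul_rpow_of_nonneg _ _ (by positivity), ← ENNReal.rpow_mul,
      mul_one_div_cancel hq₀.ne', ENNReal.rpow_one]

theorem lqNormDtOverT_lt_top_iff_of_le_of_le (hq : q ≠ 0) {K : ℝ≥0∞} (hK : K ≠ ∞)
    (hlow : ∀ t ∈ Ioo (0 : ℝ) 1, w t ≤ g t) (hup : ∀ t ∈ Ioo (0 : ℝ) 1, g t ≤ K * w t) :
    lqNormDtOverT q g < ∞ ↔ lqNormDtOverT q w < ∞ := by
  refine ⟨(lqNormDtOverT_mono hlow).trans_lt, fun hw => (lqNormDtOverT_mono hup).trans_lt ?_⟩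
  rw [lqNormDtOverT_const_mul hq hK]
  exact ENNReal.mul_lt_top hK.lt_top hw

theorem iSup_Ioo_ofReal_rpow_lt_top_iff (b : ℝ) :
    (⨆ t : {t : ℝ // t ∈ Ioo (0 : ℝ) 1}, ENNReal.ofReal ((t : ℝ) ^ b)) < ∞ ↔ 0 ≤ b := by
  refine ⟨fun hfin => ?_, fun hb => ?_⟩
  · by_contra! hb
    set M := ⨆ t : {t : ℝ // t ∈ Ioo (0 : ℝ) 1}, ENNReal.ofReal ((t : ℝ) ^ b)
    obtain ⟨t, hMt, ht⟩ := (((tendsto_rpow_neg_nhdsGT_zero hb).eventually_gt_atTop M.toReal).and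
      (Ioo_mem_nhdsGT zero_lt_one)).exists
    have hle : ENNReal.ofReal (t ^ b) ≤ M :=
      le_iSup_of_le (⟨t, ht⟩ : {t : ℝ // t ∈ Ioo (0 : ℝ) 1}) le_rfl
    exact hMt.not_ge ((ENNReal.ofReal_le_iff_le_toReal hfin.ne).1 hle)
  · refine (iSup_le fun t => ?_).trans_lt ENNReal.one_lt_top
    exact ENNReal.ofReal_le_one.2 (Real.rpow_le_one t.2.1.le t.2.2.le hb)

theorem lintegral_Ioo_ofReal_rpow_lt_top_iff (b : ℝ) :
    ∫⁻ t in Ioo (0 : ℝ) 1, ENNReal.ofReal (t ^ b) < ∞ ↔ -1 < b := by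
  rw [lt_top_iff_ne_top, lintegral_ofReal_ne_top_iff_integrable (by fun_prop)
    (ae_restrict_of_forall_mem measurableSet_Ioo fun t ht => Real.rpow_nonneg ht.1.le b)]
  exact intervalIntegral.integrableOn_Ioo_rpow_iff zero_lt_one

theorem lqNormDtOverT_ofReal_rpow_lt_top_iff (hq : q ≠ 0) (b : ℝ) :
    lqNormDtOverT q (fun t => ENNReal.ofReal (t ^ b)) < ∞ ↔ 0 < b ∨ b = 0 ∧ q = ∞ := by
  unfold lqNormDtOverT
  split_ifs with hq_top
  · rw [iSup_Ioo_ofReal_rpow_lt_top_iff]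
    simp [hq_top, le_iff_lt_or_eq, eq_comm]
  · have hq₀ : 0 < q.toReal := ENNReal.toReal_pos hq hq_top
    have hdens : ∀ t ∈ Ioo (0 : ℝ) 1, ENNReal.ofReal (t ^ b) ^ q.toReal * ENNReal.ofReal t⁻¹ =
        ENNReal.ofReal (t ^ (b * q.toReal - 1)) := by
      intro t ht
      rw [ENNReal.ofReal_rpow_of_nonneg (Real.rpow_nonneg ht.1.le b) hq₀.le,
        ← ENNReal.ofReal_mul (Real.rpow_nonneg (Real.rpow_nonneg ht.1.le b) _),
        ← Real.rpow_mul ht.1.le, ← Real.rpow_neg_one, ← Real.rpow_add ht.1, sub_eq_add_neg]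
    rw [ENNReal.rpow_lt_top_iff_of_pos (by positivity),
      setLIntegral_congr_fun measurableSet_Ioo hdens, lintegral_Ioo_ofReal_rpow_lt_top_iff,
      ← zero_sub, sub_lt_sub_iff_right, mul_pos_iff_of_pos_right hq₀]
    simp [hq_top]

end lqNormDtOverT

/-- For `Ω = [-1/2,1/2]^n`, `0 < p < ∞`, `0 < q ≤ ∞`, `σ > 0` and an integer `r > σ`, the
Besov seminorm `(∫_0^1 t^{-σq} ω_r(χ_Ω,t)_p^q dt/t)^{1/q}` (supremum modification for
`q = ∞`) is finite if and only if `σ < 1/p`, or `σ = 1/p` and `q = ∞`. -/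
theorem stmt_9 (n : ℕ) (hn : 1 ≤ n) (p σ : ℝ) (hp : 0 < p) (hσ : 0 < σ)
    (q : ℝ≥0∞) (hq : 0 < q) (r : ℕ) (hr : σ < r) :
    ((if q = ∞ then
        ⨆ t : {t : ℝ // t ∈ Ioo (0 : ℝ) 1},
          ENNReal.ofReal ((t : ℝ) ^ (-σ)) * omegaCube n r (ENNReal.ofReal p) (t : ℝ)
      else
        (∫⁻ t in Ioo (0 : ℝ) 1,
          (ENNReal.ofReal (t ^ (-σ)) * omegaCube n r (ENNReal.ofReal p) t) ^ q.toReal *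
            ENNReal.ofReal t⁻¹) ^ (1 / q.toReal)) < ∞)
      ↔ (σ < 1 / p ∨ (σ = 1 / p ∧ q = ∞)) := by
  have hr₀ : r ≠ 0 := by rintro rfl; simp at hr; linarith
  set K : ℝ≥0∞ := 2 ^ r * (4 * n * (r + 1) * r : ℝ≥0∞) ^ (1 / p)
  have hK : K ≠ ∞ := by finiteness
  have hsplit : ∀ t ∈ Ioo (0 : ℝ) 1,
      ENNReal.ofReal (t ^ (1 / p - σ)) =
        ENNReal.ofReal (t ^ (-σ)) * ENNReal.ofReal (t ^ (1 / p)) := by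
    intro t ht
    rw [sub_eq_neg_add, Real.rpow_add ht.1, ENNReal.ofReal_mul (Real.rpow_nonneg ht.1.le _)]
  change lqNormDtOverT q (fun t => ENNReal.ofReal (t ^ (-σ)) * omegaCube n r (ENNReal.ofReal p) t)
    < ∞ ↔ _
  rw [lqNormDtOverT_lt_top_iff_of_le_of_le (w := fun t => ENNReal.ofReal (t ^ (1 / p - σ)))
    hq.ne' hK (fun t ht => ?_) (fun t ht => ?_), lqNormDtOverT_ofReal_rpow_lt_top_iff hq.ne',
    sub_pos, sub_eq_zero, eq_comm]
  · rw [hsplit t ht]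
    gcongr
    exact ofReal_rpow_le_omegaCube hn hp ht.1 ht.2.le
  · rw [hsplit t ht, mul_left_comm]
    gcongr
    exact omegaCube_le hr₀ hp ht.1.le

end
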